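/- arXiv:1612.06767 — 4 statements merged into one kernel-verified Lean document; each statement's English description precedes it below -/
import Mathlib

section
/- For any convex bodies K, C in R^n, the inclusions ((s(K)+1)/s(K))·K ⊂ (translate of) K−K ⊂ (D(K,C)/2)·(C−C) ⊂ (translate of) (D(K,C)/2)(s(C)+1)·C hold, where the inclusions of the first and last are up to translation. -/
/-!
Everything rests on circumradii being attained: for compact `C`, the pairs `(ρ, t)` with
`0 ≤ ρ ≤ M` and `A ⊆ t + ρ C` form a compact set. Hence `-K ⊆ t + s(K) K`, `-C ⊆ t' + s(C) C`,
and each segment `[x, y] ⊆ K` lies in a translate of `r C` with `2 r ≤ D(K, C)`.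
* If `-x = t + s k` with `k ∈ K`, then `((s + 1) / s) x = (x - k) - t / s`.
* `x - y ∈ r (C - C) ⊆ (D / 2) (C - C)`, as `C - C` is convex and contains `0`.
* If `-c₂ = t' + s c₃`, then `c₁ - c₂ = t' + (c₁ + s c₃) ∈ t' + (1 + s) C` by convexity of `C`.
-/

open Pointwise

/-- A convex body: compact, convex, with nonempty interior. -/
def IsBody {n : ℕ} (K : Set (Fin n → ℝ)) : Prop :=
  Convex ℝ K ∧ IsCompact K ∧ (interior K).Nonempty

/-- Circumradius of `K` w.r.t. `C`: smallest `ρ > 0` with `K` contained in a translate of `ρ • C`. -/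
noncomputable def circR {n : ℕ} (K C : Set (Fin n → ℝ)) : ℝ :=
  sInf {ρ : ℝ | 0 < ρ ∧ ∃ t : Fin n → ℝ, K ⊆ t +ᵥ ρ • C}

/-- Inradius of `K` w.r.t. `C`: largest `ρ ≥ 0` with a translate of `ρ • C` inside `K`. -/
noncomputable def inrad {n : ℕ} (K C : Set (Fin n → ℝ)) : ℝ :=
  sSup {ρ : ℝ | 0 ≤ ρ ∧ ∃ t : Fin n → ℝ, t +ᵥ ρ • C ⊆ K}

/-- Minkowski asymmetry `s(K) = R(-K, K)`. -/
noncomputable def asym {n : ℕ} (K : Set (Fin n → ℝ)) : ℝ := circR (-K) K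

/-- Diameter of `K` w.r.t. `C`: twice the maximal circumradius of a segment with endpoints in `K`. -/
noncomputable def diamC {n : ℕ} (K C : Set (Fin n → ℝ)) : ℝ :=
  sSup {d : ℝ | ∃ x ∈ K, ∃ y ∈ K, d = 2 * circR (segment ℝ x y) C}

/-- `K` is (diametrically) complete w.r.t. `C`. -/
def IsDiamComplete {n : ℕ} (K C : Set (Fin n → ℝ)) : Prop :=
  ∀ K' : Set (Fin n → ℝ), IsBody K' → K ⊂ K' → diamC K C < diamC K' C

/-- `S` is an `n`-simplex: convex hull of `n+1` affinely independent points. -/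
def IsSimplexBody {n : ℕ} (S : Set (Fin n → ℝ)) : Prop :=
  ∃ p : Fin (n + 1) → (Fin n → ℝ), AffineIndependent ℝ p ∧ S = convexHull ℝ (Set.range p)

/-- Support function of `C`. -/
noncomputable def supp {n : ℕ} (C : Set (Fin n → ℝ)) (a : Fin n → ℝ) : ℝ :=
  sSup {r : ℝ | ∃ x ∈ C, r = dotProduct a x}

/-- `A ⊆ₜ B`: `A` is contained in some translate of `B`. -/
def SubsetT {n : ℕ} (A B : Set (Fin n → ℝ)) : Prop := ∃ t : Fin n → ℝ, A ⊆ t +ᵥ B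

open Set Bornology

section Translates

variable {E : Type*} [NormedAddCommGroup E] [NormedSpace ℝ E]

lemma isCompact_setOf_subset_vadd_smul {A B : Set E} (hB : IsCompact B) {a : E} (ha : a ∈ A)
    (M : ℝ) : IsCompact {p : ℝ × E | p.1 ∈ Icc 0 M ∧ A ⊆ p.2 +ᵥ p.1 • B} := by
  set F : E → Set (ℝ × E) := fun x ↦ {p | p.1 ∈ Icc 0 M ∧ x ∈ p.2 +ᵥ p.1 • B}
  have hF : ∀ x, F x = (fun q : ℝ × E ↦ (q.1, x - q.1 • q.2)) '' (Icc 0 M ×ˢ B) := by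
    intro x
    ext ⟨ρ, t⟩
    simp only [F, mem_ofPred_eq, mem_vadd_set, mem_smul_set, mem_image, mem_prod, Prod.mk.injEq,
      Prod.exists, vadd_eq_add]
    constructor
    · rintro ⟨hρ, _, ⟨b, hb, rfl⟩, rfl⟩
      exact ⟨ρ, b, ⟨hρ, hb⟩, rfl, by abel⟩
    · rintro ⟨ρ, b, ⟨hρ, hb⟩, rfl, rfl⟩
      exact ⟨hρ, _, ⟨b, hb, rfl⟩, by abel⟩
  have hcompact : ∀ x, IsCompact (F x) := fun x ↦
    hF x ▸ (isCompact_Icc.prod hB).image (by fun_prop)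
  have hinter : {p : ℝ × E | p.1 ∈ Icc 0 M ∧ A ⊆ p.2 +ᵥ p.1 • B} = ⋂ x ∈ A, F x := by
    ext p
    simp only [F, mem_ofPred_eq, mem_iInter]
    exact ⟨fun h x hx ↦ ⟨h.1, h.2 hx⟩, fun h ↦ ⟨(h a ha).1, fun x hx ↦ (h x hx).2⟩⟩
  rw [hinter]
  exact (hcompact a).of_isClosed_subset (isClosed_biInter fun x _ ↦ (hcompact x).isClosed)
    (biInter_subset_of_mem ha)

lemma exists_pos_subset_vadd_smul {A C : Set E} (hA : IsBounded A) (hC : (interior C).Nonempty) :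
    ∃ ρ : ℝ, 0 < ρ ∧ ∃ t : E, A ⊆ t +ᵥ ρ • C := by
  obtain ⟨c, hc⟩ := hC
  have hnhds : -c +ᵥ C ∈ nhds (0 : E) := by
    simpa using vadd_mem_nhds_vadd (-c) (mem_interior_iff_mem_nhds.1 hc)
  obtain ⟨ρ, hρ, hsub⟩ := ((NormedSpace.isVonNBounded_iff ℝ).2 hA hnhds).exists_pos
  refine ⟨ρ, hρ, -(ρ • c), (hsub ρ (le_of_eq (Real.norm_of_nonneg hρ.le).symm)).trans ?_⟩
  rintro _ ⟨_, ⟨y, hy, rfl⟩, rfl⟩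
  exact ⟨ρ • y, smul_mem_smul_set hy, by simp [vadd_eq_add, smul_add]⟩

lemma sub_mem_smul_sub_of_mem_vadd_smul {C : Set E} {t x y : E} {r : ℝ}
    (hx : x ∈ t +ᵥ r • C) (hy : y ∈ t +ᵥ r • C) : x - y ∈ r • (C - C) := by
  obtain ⟨_, ⟨cx, hcx, rfl⟩, rfl⟩ := hx
  obtain ⟨_, ⟨cy, hcy, rfl⟩, rfl⟩ := hy
  exact ⟨cx - cy, sub_mem_sub hcx hcy, by simp [vadd_eq_add, smul_sub]⟩

lemma Convex.smul_subset_smul_of_le {S : Set E} (hS : Convex ℝ S) (h0 : (0 : E) ∈ S) {a b : ℝ}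
    (ha : 0 ≤ a) (hab : a ≤ b) : a • S ⊆ b • S := by
  rcases (ha.trans hab).eq_or_lt with hb | hb
  · rw [show a = b by linarith]
  rintro _ ⟨x, hx, rfl⟩
  refine ⟨(a / b) • x,
    hS.smul_mem_of_zero_mem h0 hx ⟨by positivity, div_le_one_of_le₀ hab hb.le⟩, ?_⟩
  simp only [smul_smul, mul_div_cancel₀ _ hb.ne']

lemma smul_subset_vadd_sub_self {K : Set E} {s : ℝ} {t : E} (h : -K ⊆ t +ᵥ s • K) :
    ((s + 1) / s) • K ⊆ -(s⁻¹ • t) +ᵥ (K - K) := by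
  rintro _ ⟨x, hx, rfl⟩
  rcases eq_or_ne s 0 with rfl | hs
  -- junk case: `(0 + 1) / 0 = 0`
  · exact ⟨x - x, sub_mem_sub hx hx, by simp⟩
  obtain ⟨_, ⟨k, hk, rfl⟩, hxk⟩ := h (neg_mem_neg.2 hx)
  refine ⟨x - k, sub_mem_sub hx hk, ?_⟩
  simp only [vadd_eq_add] at hxk ⊢
  rw [← neg_neg x, ← hxk]
  match_scalars <;> field_simp <;> ring

lemma Convex.sub_self_subset_vadd_add_one_smul {C : Set E} (hC : Convex ℝ C) {s : ℝ} (hs : 0 ≤ s)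
    {t : E} (h : -C ⊆ t +ᵥ s • C) : C - C ⊆ t +ᵥ (s + 1) • C := by
  rintro _ ⟨c₁, hc₁, c₂, hc₂, rfl⟩
  obtain ⟨_, ⟨c₃, hc₃, rfl⟩, hc₂₃⟩ := h (neg_mem_neg.2 hc₂)
  refine ⟨c₁ + s • c₃, ?_, ?_⟩
  · rw [add_comm s, hC.add_smul zero_le_one hs, one_smul]
    exact add_mem_add hc₁ (smul_mem_smul_set hc₃)
  · simp only [vadd_eq_add] at hc₂₃ ⊢
    rw [← neg_neg c₂, ← hc₂₃]
    abel

end Translates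

section Radii

variable {n : ℕ}

lemma circR_nonneg (A C : Set (Fin n → ℝ)) : 0 ≤ circR A C :=
  Real.sInf_nonneg fun _ hρ ↦ hρ.1.le

lemma circR_le {A C : Set (Fin n → ℝ)} {ρ : ℝ} (hρ : 0 < ρ) {t : Fin n → ℝ}
    (h : A ⊆ t +ᵥ ρ • C) : circR A C ≤ ρ :=
  csInf_le ⟨0, fun _ hρ ↦ hρ.1.le⟩ ⟨hρ, t, h⟩

lemma exists_subset_vadd_circR_smul {A C : Set (Fin n → ℝ)} (hA : IsBounded A)
    (hAne : A.Nonempty) (hC : IsCompact C) (hCi : (interior C).Nonempty) :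
    ∃ t : Fin n → ℝ, A ⊆ t +ᵥ circR A C • C := by
  obtain ⟨a, ha⟩ := hAne
  obtain ⟨ρ₀, hρ₀, t₀, ht₀⟩ := exists_pos_subset_vadd_smul hA hCi
  have happrox : ∀ ε > 0, ∃ ρ, circR A C ≤ ρ ∧ ρ < circR A C + ε ∧
      ∃ t : Fin n → ℝ, A ⊆ t +ᵥ ρ • C := by
    intro ε hε
    obtain ⟨ρ, ⟨hρ, t, ht⟩, hlt⟩ :=
      exists_lt_of_csInf_lt (s := {ρ : ℝ | 0 < ρ ∧ ∃ t : Fin n → ℝ, A ⊆ t +ᵥ ρ • C})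
        ⟨ρ₀, hρ₀, t₀, ht₀⟩ (lt_add_of_pos_right _ hε)
    exact ⟨ρ, circR_le hρ ht, hlt, t, ht⟩
  set P := {p : ℝ × (Fin n → ℝ) | p.1 ∈ Icc 0 (circR A C + 1) ∧ A ⊆ p.2 +ᵥ p.1 • C}
  have hP : IsCompact (Prod.fst '' P) :=
    (isCompact_setOf_subset_vadd_smul hC ha _).image continuous_fst
  have hr : circR A C ∈ closure (Prod.fst '' P) := by
    refine Metric.mem_closure_iff.2 fun ε hε ↦ ?_
    obtain ⟨ρ, hrρ, hρ, t, ht⟩ := happrox (min ε 1) (lt_min hε one_pos)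
    refine ⟨ρ, ⟨(ρ, t), ⟨⟨(circR_nonneg A C).trans hrρ, ?_⟩, ht⟩, rfl⟩, ?_⟩
    · linarith [min_le_right ε 1]
    · rw [Real.dist_eq, abs_sub_lt_iff]
      constructor <;> linarith [min_le_left ε 1]
  obtain ⟨⟨_, t⟩, ⟨-, ht⟩, rfl⟩ := hP.isClosed.closure_eq ▸ hr
  exact ⟨t, ht⟩

lemma two_mul_circR_segment_le_diamC {K C : Set (Fin n → ℝ)} (hKc : Convex ℝ K)
    (hKb : IsBounded K) (hC : (interior C).Nonempty) {x y : Fin n → ℝ} (hx : x ∈ K) (hy : y ∈ K) :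
    2 * circR (segment ℝ x y) C ≤ diamC K C := by
  obtain ⟨ρ, hρ, t, ht⟩ := exists_pos_subset_vadd_smul hKb hC
  refine le_csSup ⟨2 * ρ, ?_⟩ ⟨x, hx, y, hy, rfl⟩
  rintro _ ⟨x, hx, y, hy, rfl⟩
  have := circR_le hρ ((hKc.segment_subset hx hy).trans ht)
  linarith

lemma sub_subset_diamC_smul_sub {K C : Set (Fin n → ℝ)} (hKc : Convex ℝ K) (hKb : IsBounded K)
    (hC : IsBody C) : K - K ⊆ (diamC K C / 2) • (C - C) := by
  rintro _ ⟨x, hx, y, hy, rfl⟩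
  obtain ⟨t, ht⟩ := exists_subset_vadd_circR_smul (hKb.subset (hKc.segment_subset hx hy))
    ⟨x, left_mem_segment ℝ x y⟩ hC.2.1 hC.2.2
  have hr := two_mul_circR_segment_le_diamC hKc hKb hC.2.2 hx hy
  refine (hC.1.sub hC.1).smul_subset_smul_of_le (hC.2.2.mono interior_subset).zero_mem_sub
    (circR_nonneg (segment ℝ x y) C) (by linarith) ?_
  exact sub_mem_smul_sub_of_mem_vadd_smul (ht (left_mem_segment ℝ x y))
    (ht (right_mem_segment ℝ x y))

lemma exists_neg_subset_vadd_asym_smul {K : Set (Fin n → ℝ)} (hK : IsCompact K)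
    (hKi : (interior K).Nonempty) : ∃ t : Fin n → ℝ, -K ⊆ t +ᵥ asym K • K :=
  exists_subset_vadd_circR_smul hK.isBounded.neg (hKi.mono interior_subset).neg hK hKi

end Radii

theorem stmt12 {n : ℕ} (K C : Set (Fin n → ℝ)) (hK : IsBody K) (hC : IsBody C) :
    SubsetT (((asym K + 1) / asym K) • K) (K - K) ∧
    K - K ⊆ (diamC K C / 2) • (C - C) ∧
    SubsetT ((diamC K C / 2) • (C - C)) ((diamC K C / 2 * (asym C + 1)) • C) := by
  obtain ⟨hKc, hKk, hKi⟩ := hK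
  obtain ⟨tK, htK⟩ := exists_neg_subset_vadd_asym_smul hKk hKi
  obtain ⟨tC, htC⟩ := exists_neg_subset_vadd_asym_smul hC.2.1 hC.2.2
  have hCC : C - C ⊆ tC +ᵥ (asym C + 1) • C :=
    hC.1.sub_self_subset_vadd_add_one_smul (circR_nonneg _ _) htC
  refine ⟨⟨_, smul_subset_vadd_sub_self htK⟩, sub_subset_diamC_smul_sub hKc hKk.isBounded hC,
    ⟨(diamC K C / 2) • tC, ?_⟩⟩
  rintro _ ⟨_, hz, rfl⟩
  obtain ⟨_, ⟨c, hc, rfl⟩, rfl⟩ := hCC hz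
  exact ⟨_, smul_mem_smul_set hc, by simp only [vadd_eq_add, smul_add, mul_smul]⟩
end

section
/- If S = conv{p^1,…,p^{n+1}} is an n-simplex that is diametrically complete with respect to a convex body C in R^n, then S is equilateral with respect to C, i.e., D([p^i,p^j],C) = D(S,C) for all 1 ≤ i < j ≤ n+1. -/
/-!
Write `‖·‖` for the norm with unit ball `(1/2)(C - C)` and `D` for the diameter of the simplex.
Since a complete body cannot be enlarged without increasing its diameter, a point `x` on the
boundary of `S` is at distance at least `D` from some point of `S` (otherwise a point just outside
`S` near `x` could be added), and by convexity of `‖· - x‖` from some vertex `p k`. Take `x` the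
centroid of the facet opposite `p j`. Then `‖x - p k‖` is at most the mean of `‖p l - p k‖` over
the vertices `p l` of that facet, each at most `D`; so all of them equal `D`. This rules out
`k ≠ j` (the term `l = k` vanishes) and for `k = j` gives `‖p i - p j‖ = D`.
-/

open Pointwise

open Set Topology

section Gauge

variable {E : Type*} [AddCommGroup E] [Module ℝ E] {C : Set E}

theorem segment_subset_vadd_smul_iff (hC : Convex ℝ C) (x y : E) (ρ : ℝ) :
    (∃ t : E, segment ℝ x y ⊆ t +ᵥ ρ • C) ↔ y - x ∈ ρ • (C - C) := by
  constructor
  · rintro ⟨t, ht⟩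
    obtain ⟨_, ⟨a, ha, rfl⟩, hy⟩ := mem_vadd_set.1 (ht (right_mem_segment ℝ x y))
    obtain ⟨_, ⟨b, hb, rfl⟩, hx⟩ := mem_vadd_set.1 (ht (left_mem_segment ℝ x y))
    refine ⟨a - b, sub_mem_sub ha hb, ?_⟩
    simp only [← hx, ← hy, vadd_eq_add, smul_sub]
    abel
  · rintro ⟨_, ⟨a, ha, b, hb, rfl⟩, hxy⟩
    refine ⟨x - ρ • b, ((hC.smul ρ).vadd _).segment_subset ?_ ?_⟩
    · exact mem_vadd_set.2 ⟨ρ • b, smul_mem_smul_set hb, sub_add_cancel x _⟩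
    · refine mem_vadd_set.2 ⟨ρ • a, smul_mem_smul_set ha, ?_⟩
      simp only at hxy
      rw [vadd_eq_add]
      linear_combination (norm := module) hxy

theorem Convex.balanced_sub_self (hC : Convex ℝ C) : Balanced ℝ (C - C) :=
  (balanced_iff_neg_mem (hC.sub hC)).2 fun _ ⟨a, ha, b, hb, hab⟩ =>
    ⟨b, hb, a, ha, by rw [← hab, neg_sub]⟩

end Gauge

theorem sub_self_mem_nhds_zero {G : Type*} [TopologicalSpace G] [AddGroup G]
    [IsTopologicalAddGroup G] {C : Set G} (hC : (interior C).Nonempty) : C - C ∈ 𝓝 (0 : G) := by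
  obtain ⟨x, hx⟩ := hC
  exact Filter.mem_of_superset
    ((isOpen_interior.sub_left (s := interior C)).mem_nhds ⟨x, hx, x, hx, sub_self x⟩)
    (sub_subset_sub interior_subset interior_subset)

section Centroid

variable {E ι : Type*} [AddCommGroup E] [Module ℝ E]

theorem Seminorm.map_centroid_sub_le (g : Seminorm ℝ E) {s : Finset ι} (hs : s.Nonempty)
    (p : ι → E) (y : E) :
    g (s.centroid ℝ p - y) ≤ (s.card : ℝ)⁻¹ * ∑ k ∈ s, g (p k - y) := by
  have hw := s.sum_centroidWeights_eq_one_of_nonempty ℝ hs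
  have hc : s.centroid ℝ p - y = ∑ k ∈ s, s.centroidWeights ℝ k • (p k - y) := by
    rw [Finset.centroid_def, s.affineCombination_eq_weightedVSubOfPoint_vadd_of_sum_eq_one _ _ hw y,
      Finset.weightedVSubOfPoint_apply, vadd_eq_add, add_sub_cancel_right]
    rfl
  rw [hc, Finset.mul_sum]
  refine (g.convexOn.map_sum_le (fun k _ => ?_) hw fun _ _ => mem_univ _).trans_eq ?_
  · rw [Finset.centroidWeights_apply]; positivity
  · simp only [Finset.centroidWeights_apply, smul_eq_mul]

theorem Seminorm.le_map_sub_of_le_map_centroid_sub (g : Seminorm ℝ E) (p : ι → E) {s : Finset ι}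
    {y : E} {D : ℝ} (hD : ∀ k ∈ s, g (p k - y) ≤ D) (hfar : D ≤ g (s.centroid ℝ p - y))
    {m : ι} (hm : m ∈ s) : D ≤ g (p m - y) := by
  classical
  have hcard : 0 < s.card := Finset.card_pos.2 ⟨m, hm⟩
  have hsum := hfar.trans (g.map_centroid_sub_le ⟨m, hm⟩ p y)
  rw [← s.add_sum_erase _ hm, le_inv_mul_iff₀ (by exact_mod_cast hcard)] at hsum
  have hrest := (s.erase m).sum_le_card_nsmul _ D fun k hk => hD k (Finset.mem_of_mem_erase hk)
  rw [Finset.card_erase_of_mem hm, nsmul_eq_mul, Nat.cast_sub hcard, Nat.cast_one] at hrest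
  linarith

end Centroid

theorem AffineBasis.centroid_notMem_interior_convexHull {ι E : Type*} [Finite ι]
    [NormedAddCommGroup E] [NormedSpace ℝ E] (b : AffineBasis ι ℝ E) {s : Finset ι}
    (hs : s.Nonempty) {j : ι} (hj : j ∉ s) :
    s.centroid ℝ b ∉ interior (convexHull ℝ (range b)) := by
  rw [b.interior_convexHull]
  intro h
  have hpos := h j
  rw [Finset.centroid_def,
    b.coord_apply_combination_of_notMem hj (s.sum_centroidWeights_eq_one_of_nonempty ℝ hs)] at hpos
  exact hpos.false

theorem circR_segment {n : ℕ} {C : Set (Fin n → ℝ)} (hC : Convex ℝ C) (x y : Fin n → ℝ) :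
    circR (segment ℝ x y) C = gauge (C - C) (y - x) := by
  unfold circR gauge
  simp only [segment_subset_vadd_smul_iff hC]

namespace IsBody

variable {n : ℕ} {C : Set (Fin n → ℝ)} (hC : IsBody C)

/-- The norm `‖·‖_{(1/2)(C - C)}` of the paper, so that `diamC K C` is the largest
`diffSeminorm (y - x)` with `x y ∈ K`. -/
noncomputable def diffSeminorm : Seminorm ℝ (Fin n → ℝ) :=
  (2 : NNReal) • gaugeSeminorm hC.1.balanced_sub_self (hC.1.sub hC.1)
    (absorbent_nhds_zero (sub_self_mem_nhds_zero hC.2.2))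

theorem diffSeminorm_apply (z : Fin n → ℝ) : hC.diffSeminorm z = 2 * gauge (C - C) z := by
  simp [diffSeminorm, gaugeSeminorm_toFun, NNReal.smul_def]

theorem continuous_diffSeminorm : Continuous hC.diffSeminorm := by
  simp_rw [funext hC.diffSeminorm_apply]
  exact (continuous_gauge (hC.1.sub hC.1) (sub_self_mem_nhds_zero hC.2.2)).const_mul 2

theorem diamC_eq_sSup (K : Set (Fin n → ℝ)) :
    diamC K C = sSup ((fun z => hC.diffSeminorm (z.2 - z.1)) '' K ×ˢ K) := by
  unfold diamC
  congr 1
  ext d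
  simp only [circR_segment hC.1, diffSeminorm_apply, mem_ofPred_eq, mem_image, mem_prod,
    Prod.exists]
  constructor
  · rintro ⟨x, hx, y, hy, rfl⟩
    exact ⟨x, y, ⟨hx, hy⟩, rfl⟩
  · rintro ⟨x, y, ⟨hx, hy⟩, rfl⟩
    exact ⟨x, hx, y, hy, rfl⟩

theorem diffSeminorm_le_diamC {K : Set (Fin n → ℝ)} (hK : IsCompact K) {x y : Fin n → ℝ}
    (hx : x ∈ K) (hy : y ∈ K) : hC.diffSeminorm (y - x) ≤ diamC K C := by
  rw [hC.diamC_eq_sSup]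
  refine le_csSup ((hK.prod hK).bddAbove_image ?_) ⟨(x, y), ⟨hx, hy⟩, rfl⟩
  exact (hC.continuous_diffSeminorm.comp (by fun_prop)).continuousOn

theorem diamC_convexHull_le {F : Set (Fin n → ℝ)} (hF : F.Nonempty) {B : ℝ}
    (h : ∀ x ∈ F, ∀ y ∈ F, hC.diffSeminorm (y - x) ≤ B) : diamC (convexHull ℝ F) C ≤ B := by
  have hconv : ∀ w, ConvexOn ℝ univ fun v => hC.diffSeminorm (v - w) := fun w => by
    simpa [Function.comp_def, neg_add_eq_sub] using hC.diffSeminorm.convexOn.translate_right (-w)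
  have hne := hF.mono (subset_convexHull ℝ F)
  rw [hC.diamC_eq_sSup]
  refine csSup_le ((hne.prod hne).image _) ?_
  rintro _ ⟨⟨u, v⟩, ⟨hu, hv⟩, rfl⟩
  obtain ⟨b, hb, hvb⟩ := (hconv u).exists_ge_of_mem_convexHull (subset_univ F) hv
  obtain ⟨a, ha, hua⟩ := (hconv b).exists_ge_of_mem_convexHull (subset_univ F) hu
  rw [map_sub_rev hC.diffSeminorm b u] at hvb
  exact hvb.trans (hua.trans (h b hb a ha))

theorem diamC_segment (x y : Fin n → ℝ) : diamC (segment ℝ x y) C = hC.diffSeminorm (y - x) := by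
  rw [← convexHull_pair]
  refine le_antisymm (hC.diamC_convexHull_le (insert_nonempty x {y}) ?_) ?_
  · rintro a (rfl | rfl) b (rfl | rfl) <;> simp [map_sub_rev]
  · exact hC.diffSeminorm_le_diamC ((toFinite _).isCompact_convexHull ℝ)
      (subset_convexHull ℝ _ (mem_insert x {y})) (subset_convexHull ℝ _ (mem_insert_of_mem x rfl))

end IsBody

namespace IsDiamComplete

variable {n : ℕ} {C F : Set (Fin n → ℝ)}

theorem exists_diamC_lt_of_notMem (hK : IsDiamComplete (convexHull ℝ F) C) (hC : IsBody C)
    (hF : F.Finite) (hint : (interior (convexHull ℝ F)).Nonempty) {q : Fin n → ℝ}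
    (hq : q ∉ convexHull ℝ F) : ∃ a ∈ F, diamC (convexHull ℝ F) C < hC.diffSeminorm (q - a) := by
  by_contra! hfar
  have hsub : convexHull ℝ F ⊆ convexHull ℝ (insert q F) := convexHull_mono (subset_insert q F)
  have hbody : IsBody (convexHull ℝ (insert q F)) :=
    ⟨convex_convexHull ℝ _, (hF.insert q).isCompact_convexHull ℝ, hint.mono (interior_mono hsub)⟩
  have hlt := hK _ hbody
    ((ssubset_iff_of_subset hsub).2 ⟨q, subset_convexHull ℝ _ (mem_insert q F), hq⟩)
  obtain ⟨a₀, ha₀⟩ : F.Nonempty := by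
    by_contra! h
    simp [h] at hint
  have hcompact := hF.isCompact_convexHull ℝ
  refine hlt.not_ge (hC.diamC_convexHull_le (insert_nonempty q F) ?_)
  rintro x (rfl | hx) y (rfl | hy)
  · simpa using (apply_nonneg _ _).trans (hfar a₀ ha₀)
  · rw [map_sub_rev]; exact hfar y hy
  · exact hfar x hx
  · exact hC.diffSeminorm_le_diamC hcompact (subset_convexHull ℝ F hx) (subset_convexHull ℝ F hy)

theorem exists_diamC_le_of_notMem_interior (hK : IsDiamComplete (convexHull ℝ F) C) (hC : IsBody C)
    (hF : F.Finite) (hint : (interior (convexHull ℝ F)).Nonempty) {x : Fin n → ℝ}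
    (hx : x ∉ interior (convexHull ℝ F)) :
    ∃ a ∈ F, diamC (convexHull ℝ F) C ≤ hC.diffSeminorm (x - a) := by
  by_contra! hnear
  set U := ⋂ a ∈ F, {q | hC.diffSeminorm (q - a) < diamC (convexHull ℝ F) C}
  have hU : IsOpen U := hF.isOpen_biInter fun a _ =>
    isOpen_lt (hC.continuous_diffSeminorm.comp (by fun_prop)) continuous_const
  obtain ⟨q, hqU, hq⟩ := not_subset.1 fun h : U ⊆ convexHull ℝ F =>
    hx (interior_maximal h hU (mem_iInter₂.2 hnear))
  obtain ⟨a, ha, hlt⟩ := hK.exists_diamC_lt_of_notMem hC hF hint hq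
  exact (mem_iInter₂.1 hqU a ha).not_gt hlt

end IsDiamComplete

theorem stmt13 {n : ℕ} (p : Fin (n + 1) → (Fin n → ℝ)) (hind : AffineIndependent ℝ p)
    (S C : Set (Fin n → ℝ)) (hS : S = convexHull ℝ (Set.range p)) (hC : IsBody C)
    (hcomp : IsDiamComplete S C) :
    ∀ i j : Fin (n + 1), i ≠ j → diamC (segment ℝ (p i) (p j)) C = diamC S C := by
  intro i j hij
  subst hS
  let b : AffineBasis (Fin (n + 1)) ℝ (Fin n → ℝ) :=
    ⟨p, hind, hind.affineSpan_eq_top_iff_card_eq_finrank_add_one.2 (by simp)⟩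
  have hcompact : IsCompact (convexHull ℝ (range p)) := (finite_range p).isCompact_convexHull ℝ
  have hvert : ∀ k, p k ∈ convexHull ℝ (range p) := fun k =>
    subset_convexHull ℝ _ (mem_range_self k)
  -- The centroid of the facet opposite `p j` is a boundary point, so it is diametrically
  -- opposite to some vertex `p k`.
  obtain ⟨_, ⟨k, rfl⟩, hfar⟩ := hcomp.exists_diamC_le_of_notMem_interior hC (finite_range p)
    ⟨_, b.centroid_mem_interior_convexHull⟩
    (b.centroid_notMem_interior_convexHull (s := Finset.univ.erase j) ⟨i, by simp [hij]⟩
      (Finset.notMem_erase j _))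
  have hD : ∀ l ∈ Finset.univ.erase j, hC.diffSeminorm (p l - p k) ≤ diamC _ C := fun l _ =>
    hC.diffSeminorm_le_diamC hcompact (hvert k) (hvert l)
  rw [hC.diamC_segment]
  refine le_antisymm (hC.diffSeminorm_le_diamC hcompact (hvert i) (hvert j)) ?_
  -- Then every vertex of the facet is at distance `diamC S C` from `p k`; for `k ≠ j` this
  -- includes `p k` itself, so the diameter vanishes.
  by_cases hk : k = j
  · subst hk
    rw [map_sub_rev]
    exact hC.diffSeminorm.le_map_sub_of_le_map_centroid_sub p hD hfar (by simp [hij])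
  · have hzero := hC.diffSeminorm.le_map_sub_of_le_map_centroid_sub p hD hfar (m := k)
      (by simp [hk])
    rw [sub_self, map_zero] at hzero
    exact hzero.trans (apply_nonneg _ _)
end

section
/- Let S be a Minkowski centered triangle in R^2 and C a convex body in R^2 with S−S = C−C. Then C is a translate of λS + (1−λ)(−S) for some λ ∈ [0,1]. -/
open Pointwise

open Set

/-!
The statement is affine invariant, so we may take `S` to be the standard triangle
`Δ = {x | 0 ≤ x₀, 0 ≤ x₁, x₀ + x₁ ≤ 1}`. Its difference body is the hexagon
`|x₀|, |x₁|, |x₀ + x₁| ≤ 1`, so `C` has width `1` in the directions `x₀`, `x₁`, `x₀ + x₁` and lies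
in the intersection of three slabs of width `1`, which is a translate of `λΔ + (1 - λ)(-Δ)`.
That body has difference body `Δ - Δ = C - C`, and a compact convex set inside a set with the
same difference body is the whole set: a point outside it, separated by a functional `f`, would
produce a difference of larger `f`-value than any difference of two points of `C`.
-/

lemma vadd_set_sub_vadd_set_self {E : Type*} [AddCommGroup E] (v : E) (A : Set E) :
    (v +ᵥ A) - (v +ᵥ A) = A - A := by
  ext x
  simp only [mem_sub, mem_vadd_set, vadd_eq_add]
  constructor
  · rintro ⟨_, ⟨a, ha, rfl⟩, _, ⟨b, hb, rfl⟩, rfl⟩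
    exact ⟨a, ha, b, hb, by abel⟩
  · rintro ⟨a, ha, b, hb, rfl⟩
    exact ⟨_, ⟨a, ha, rfl⟩, _, ⟨b, hb, rfl⟩, by abel⟩

section MixWithNeg

variable {E F : Type*} [AddCommGroup E] [Module ℝ E] [AddCommGroup F] [Module ℝ F]

def mixWithNeg (lam : ℝ) (A : Set E) : Set E := lam • A + (1 - lam) • -A

lemma mixWithNeg_sub_self {A : Set E} (hA : Convex ℝ A) {lam : ℝ} (h0 : 0 ≤ lam) (h1 : lam ≤ 1) :
    mixWithNeg lam A - mixWithNeg lam A = A - A := by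
  calc mixWithNeg lam A - mixWithNeg lam A
      = (lam • A + (1 - lam) • -A) + (lam • -A + (1 - lam) • A) := by
        rw [mixWithNeg, sub_eq_add_neg, neg_add, ← smul_set_neg, ← smul_set_neg, neg_neg]
    _ = (lam • A + (1 - lam) • A) + ((1 - lam) • -A + lam • -A) := by ac_rfl
    _ = A - A := by
        rw [← hA.add_smul h0 (by linarith), ← hA.neg.add_smul (by linarith) h0, add_sub_cancel,
          sub_add_cancel, one_smul, one_smul, sub_eq_add_neg]

lemma mixWithNeg_vadd (lam : ℝ) (v : E) (A : Set E) :
    mixWithNeg lam (v +ᵥ A) = (lam • v - (1 - lam) • v) +ᵥ mixWithNeg lam A := by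
  have h : ∀ (w : E) (B : Set E), w +ᵥ B = {w} + B := fun w B => by
    rw [singleton_add]; exact image_vadd.symm
  rw [h, h, mixWithNeg, mixWithNeg, neg_add, neg_singleton, smul_add, smul_add, smul_set_singleton,
    smul_set_singleton, add_add_add_comm, singleton_add_singleton, smul_neg, ← sub_eq_add_neg]

lemma image_mixWithNeg {G : Type*} [FunLike G E F] [LinearMapClass G ℝ E F] (L : G) (lam : ℝ)
    (A : Set E) :
    L '' mixWithNeg lam A = mixWithNeg lam (L '' A) := by
  simp only [mixWithNeg, image_add, image_smul_setₛₗ, image_neg, RingHom.id_apply]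

end MixWithNeg

theorem eq_of_subset_of_sub_subset_sub {E : Type*} [NormedAddCommGroup E] [NormedSpace ℝ E]
    {K P : Set E} (hKc : IsCompact K) (hKv : Convex ℝ K) (hKP : K ⊆ P)
    (hsub : P - P ⊆ K - K) : K = P := by
  refine hKP.antisymm fun x hxP => ?_
  by_contra hxK
  obtain ⟨f, u, hfx, hfK⟩ := geometric_hahn_banach_point_closed hKv hKc.isClosed hxK
  obtain ⟨a, ha, -⟩ := hsub (sub_mem_sub hxP hxP)
  obtain ⟨q, hq, hqmax⟩ := hKc.exists_isMaxOn ⟨a, ha⟩ f.continuous.continuousOn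
  obtain ⟨b, hb, c, hc, hbc : b - c = x - q⟩ := hsub (sub_mem_sub hxP (hKP hq))
  have hfbc : f b - f c = f x - f q := by rw [← map_sub, hbc, map_sub]
  linarith [show f c ≤ f q from hqmax hc, hfK b hb]

theorem IsCompact.exists_forall_le_le_add_of_sub_subset {E : Type*} [TopologicalSpace E]
    [AddCommGroup E] [Module ℝ E] {K A : Set E} (hK : IsCompact K) (hne : K.Nonempty)
    (hKA : K - K ⊆ A) (f : E →L[ℝ] ℝ) {w : ℝ} (hfA : ∀ a ∈ A, f a ≤ w) :
    ∃ q ∈ K, ∀ x ∈ K, f q ≤ f x ∧ f x ≤ f q + w := by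
  obtain ⟨q, hq, hqmin⟩ := hK.exists_isMinOn hne f.continuous.continuousOn
  refine ⟨q, hq, fun x hx => ⟨hqmin hx, ?_⟩⟩
  have := hfA _ (hKA (sub_mem_sub hx hq))
  rw [map_sub] at this
  linarith

def stdTriangle : Set (Fin 2 → ℝ) := {x | 0 ≤ x 0 ∧ 0 ≤ x 1 ∧ x 0 + x 1 ≤ 1}

lemma convex_stdTriangle : Convex ℝ stdTriangle := by
  rintro x ⟨hx0, hx1, hx⟩ y ⟨hy0, hy1, hy⟩ a b ha hb hab
  refine ⟨?_, ?_, ?_⟩ <;> simp only [Pi.add_apply, Pi.smul_apply, smul_eq_mul]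
  · positivity
  · positivity
  · nlinarith [mul_le_mul_of_nonneg_left hx ha, mul_le_mul_of_nonneg_left hy hb]

lemma mem_smul_stdTriangle {r : ℝ} (hr : 0 ≤ r) {x : Fin 2 → ℝ} (h0 : 0 ≤ x 0) (h1 : 0 ≤ x 1)
    (h : x 0 + x 1 ≤ r) : x ∈ r • stdTriangle := by
  rcases hr.eq_or_lt with rfl | hr
  · have hx : x = 0 := by
      ext i; fin_cases i <;> simp <;> linarith
    rw [hx, zero_smul_set ⟨0, by simp [stdTriangle]⟩]
    exact zero_mem_zero
  · refine ⟨r⁻¹ • x, ⟨?_, ?_, ?_⟩, smul_inv_smul₀ hr.ne' x⟩ <;>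
      simp only [Pi.smul_apply, smul_eq_mul]
    · positivity
    · positivity
    · rw [← mul_add, inv_mul_le_one₀ hr]
      exact h

lemma mem_mixWithNeg_stdTriangle {lam : ℝ} (hlam0 : 0 ≤ lam) (hlam1 : lam ≤ 1) {x : Fin 2 → ℝ}
    (h0 : lam - 1 ≤ x 0) (h0' : x 0 ≤ lam) (h1 : lam - 1 ≤ x 1) (h1' : x 1 ≤ lam)
    (h : lam - 1 ≤ x 0 + x 1) (h' : x 0 + x 1 ≤ lam) : x ∈ mixWithNeg lam stdTriangle := by
  rw [← posPart_sub_negPart x, sub_eq_add_neg, mixWithNeg, smul_set_neg]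
  refine add_mem_add ?_ (neg_mem_neg.2 ?_)
  · refine mem_smul_stdTriangle hlam0 (posPart_nonneg _) (posPart_nonneg _) ?_
    rw [Pi.posPart_apply, Pi.posPart_apply]
    rcases le_total (x 0) 0 with hx0 | hx0 <;> rcases le_total (x 1) 0 with hx1 | hx1 <;>
      simp only [posPart_eq_zero.2, posPart_eq_self.2, hx0, hx1] <;> linarith
  · refine mem_smul_stdTriangle (by linarith) (negPart_nonneg _) (negPart_nonneg _) ?_
    rw [Pi.negPart_apply, Pi.negPart_apply]
    rcases le_total (x 0) 0 with hx0 | hx0 <;> rcases le_total (x 1) 0 with hx1 | hx1 <;>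
      simp only [negPart_eq_zero.2, negPart_eq_neg.2, hx0, hx1] <;> linarith

theorem exists_eq_vadd_mixWithNeg_stdTriangle {C : Set (Fin 2 → ℝ)} (hconv : Convex ℝ C)
    (hcomp : IsCompact C) (hne : C.Nonempty) (hdiff : C - C = stdTriangle - stdTriangle) :
    ∃ lam ∈ Icc (0 : ℝ) 1, ∃ t : Fin 2 → ℝ, C = t +ᵥ mixWithNeg lam stdTriangle := by
  have width_le (f : (Fin 2 → ℝ) →L[ℝ] ℝ)
      (hf : ∀ a ∈ stdTriangle, ∀ b ∈ stdTriangle, f a - f b ≤ 1) :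
      ∃ q ∈ C, ∀ x ∈ C, f q ≤ f x ∧ f x ≤ f q + 1 :=
    hcomp.exists_forall_le_le_add_of_sub_subset hne hdiff.le f <| by
      rintro _ ⟨a, ha, b, hb, rfl⟩
      rw [map_sub]; exact hf a ha b hb
  obtain ⟨q₀, -, hq₀⟩ := width_le (.proj 0) <| by
    rintro a ⟨-, ha1, ha⟩ b ⟨hb, -, -⟩; simp only [ContinuousLinearMap.proj_apply]; linarith
  obtain ⟨q₁, -, hq₁⟩ := width_le (.proj 1) <| by
    rintro a ⟨ha0, -, ha⟩ b ⟨-, hb, -⟩; simp only [ContinuousLinearMap.proj_apply]; linarith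
  obtain ⟨q, hq, hqs⟩ := width_le (.proj 0 + .proj 1) <| by
    rintro a ⟨-, -, ha⟩ b ⟨hb, hb', -⟩
    simp only [add_apply, ContinuousLinearMap.proj_apply]
    linarith
  simp only [add_apply, ContinuousLinearMap.proj_apply] at hq₀ hq₁ hqs
  obtain ⟨c, hc, c', hc', hcc' : c - c' = Pi.single 0 1⟩ : Pi.single 0 1 ∈ C - C := by
    rw [hdiff]; exact ⟨Pi.single 0 1, by simp [stdTriangle], 0, by simp [stdTriangle], sub_zero _⟩
  have hcc'0 : c 0 - c' 0 = 1 := by simpa using congrFun hcc' 0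
  have hcc'1 : c 1 - c' 1 = 0 := by simpa using congrFun hcc' 1
  set lam := q₀ 0 + q₁ 1 + 1 - (q 0 + q 1)
  have hlam0 : 0 ≤ lam := by
    linarith [(hq₀ c hc).2, (hq₁ c hc).2, (hqs c' hc').1, (hq₀ c' hc').1]
  have hlam1 : lam ≤ 1 := by linarith [(hq₀ q hq).1, (hq₁ q hq).1]
  refine ⟨lam, ⟨hlam0, hlam1⟩, ![q 0 + q 1 - q₁ 1, q 0 + q 1 - q₀ 0], ?_⟩
  refine eq_of_subset_of_sub_subset_sub hcomp hconv (fun x hx => ?_) ?_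
  · rw [mem_vadd_set_iff_neg_vadd_mem]
    have := hq₀ x hx; have := hq₁ x hx; have := hqs x hx
    apply mem_mixWithNeg_stdTriangle hlam0 hlam1 <;>
      simp only [vadd_eq_add, Pi.add_apply, Pi.neg_apply, Matrix.cons_val_zero,
        Matrix.cons_val_one] <;>
      linarith
  · rw [vadd_set_sub_vadd_set_self, mixWithNeg_sub_self convex_stdTriangle hlam0 hlam1, hdiff]

theorem AffineIndependent.exists_convexHull_eq_vadd_image_stdTriangle {E : Type*}
    [AddCommGroup E] [Module ℝ E] (hE : Module.finrank ℝ E = 2) {p : Fin 3 → E}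
    (hp : AffineIndependent ℝ p) :
    ∃ L : (Fin 2 → ℝ) ≃ₗ[ℝ] E, convexHull ℝ (range p) = p 0 +ᵥ L '' stdTriangle := by
  have hli : LinearIndependent ℝ fun i : Fin 2 => p i.succ - p 0 :=
    ((affineIndependent_iff_linearIndependent_vsub ℝ p 0).1 hp).comp
      (fun i => ⟨i.succ, i.succ_ne_zero⟩) fun _ _ h => Fin.succ_injective _ (Subtype.ext_iff.1 h)
  let b := basisOfLinearIndependentOfCardEqFinrank hli (by simp [hE])
  have hb : ∀ i, b i = p i.succ - p 0 :=
    congrFun (coe_basisOfLinearIndependentOfCardEqFinrank hli _)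
  refine ⟨b.equivFun.symm, ?_⟩
  have key (y : Fin 2 → ℝ) :
      p 0 +ᵥ b.equivFun.symm y = ∑ i, ![1 - y 0 - y 1, y 0, y 1] i • p i := by
    simp only [Module.Basis.equivFun_symm_apply, hb, Fin.sum_univ_two, Fin.sum_univ_three,
      Fin.succ_zero_eq_one, Fin.succ_one_eq_two, vadd_eq_add, Matrix.cons_val_zero,
      Matrix.cons_val_one, Matrix.cons_val]
    module
  refine (convexHull_min ?_ ?_).antisymm ?_
  · rw [range_subset_iff]
    intro i
    obtain ⟨y, hy, hyi⟩ : ∃ y ∈ stdTriangle, ∑ j, ![1 - y 0 - y 1, y 0, y 1] j • p j = p i := by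
      fin_cases i
      · exact ⟨![0, 0], by simp [stdTriangle], by simp [Fin.sum_univ_three]⟩
      · exact ⟨![1, 0], by simp [stdTriangle], by simp [Fin.sum_univ_three]⟩
      · exact ⟨![0, 1], by simp [stdTriangle], by simp [Fin.sum_univ_three]⟩
    exact ⟨_, mem_image_of_mem _ hy, (key y).trans hyi⟩
  · exact (convex_stdTriangle.linear_image b.equivFun.symm.toLinearMap).vadd _
  · rintro _ ⟨_, ⟨y, ⟨hy0, hy1, hy⟩, rfl⟩, rfl⟩
    beta_reduce
    rw [key]
    refine (convex_convexHull ℝ _).sum_mem (fun i _ => ?_) (by simp [Fin.sum_univ_three]; ring)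
      (fun i _ => subset_convexHull ℝ _ (mem_range_self i))
    fin_cases i <;> simp <;> linarith

theorem stmt14_general (S C : Set (Fin 2 → ℝ)) (hS : IsSimplexBody S)
    (hC : IsBody C) (hdiff : S - S = C - C) :
    ∃ lam ∈ Set.Icc (0 : ℝ) 1, ∃ t : Fin 2 → ℝ,
      C = t +ᵥ (lam • S + (1 - lam) • (-S)) := by
  obtain ⟨p, hp, rfl⟩ := hS
  obtain ⟨L, hL⟩ := hp.exists_convexHull_eq_vadd_image_stdTriangle (Module.finrank_fin_fun ℝ)
  have hC' : L.symm '' C - L.symm '' C = stdTriangle - stdTriangle := by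
    rw [← image_sub, ← hdiff, hL, vadd_set_sub_vadd_set_self, image_sub]
    simp only [image_image, LinearEquiv.symm_apply_apply, image_id']
  obtain ⟨lam, hlam, t, ht⟩ := exists_eq_vadd_mixWithNeg_stdTriangle
    (hC.1.linear_image L.symm.toLinearMap)
    (hC.2.1.image L.symm.toLinearMap.continuous_of_finiteDimensional)
    ((hC.2.2.mono interior_subset).image _) hC'
  refine ⟨lam, hlam, L t - (lam • p 0 - (1 - lam) • p 0), ?_⟩
  change C = _ +ᵥ mixWithNeg lam _
  rw [LinearEquiv.coe_coe] at ht
  rw [hL, mixWithNeg_vadd, vadd_vadd, sub_add_cancel, ← image_mixWithNeg, ← image_vadd_distrib,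
    ← ht, image_image]
  simp only [LinearEquiv.apply_symm_apply, image_id']

theorem stmt14 (S C : Set (Fin 2 → ℝ)) (hS : IsSimplexBody S) (hSbody : IsBody S)
    (hcent : -S ⊆ asym S • S) (hC : IsBody C) (hdiff : S - S = C - C) :
    ∃ lam ∈ Set.Icc (0 : ℝ) 1, ∃ t : Fin 2 → ℝ,
      C = t +ᵥ (lam • S + (1 - lam) • (-S)) :=
  stmt14_general S C hS hC hdiff
end

section
/- Let S be a Minkowski centered n-simplex in R^n, p ∈ (n+1)(S ∩ (−S)) \ (S−S), and C := conv({p} ∪ (S−S)). Then both S and −S are diametrically complete with respect to C. -/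
open Pointwise

/-! Let `λᵢ` be the barycentric coordinates of `S` and `ℓᵢ` their linear parts. Minkowski
centredness forces `λᵢ 0 = 1 / (n + 1)`, and then `(n + 1) • (S ∩ -S)` is the body
`{u | ∀ i, |ℓᵢ u| ≤ 1}`; it contains `S - S` and `p`, hence `C`. For `x, y ∈ S` the segment
`[x, y]` lies in `(x + y) / 2 + C / 2` since `±(x - y) ∈ C`, so `diamC S C ≤ 1`. Conversely, if a
translate of `ρ • C` contains `x` and `y`, then `|ℓᵢ (x - y)| ≤ 2ρ`. A point `q ∉ S` has some
`λⱼ q < 0`, so `|ℓⱼ (q - vⱼ)| = 1 - λⱼ q > 1` for the vertex `vⱼ`, and every body strictly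
containing `S` has diameter `> 1`. Segments are centrally symmetric, so
`diamC (-K) C = diamC K C`, which carries completeness over to `-S`. -/

open Set Topology

theorem segment_neg_neg {E : Type*} [AddCommGroup E] [Module ℝ E] (x y : E) :
    segment ℝ (-x) (-y) = (-(x + y)) +ᵥ segment ℝ x y := by
  rw [← image_vadd, segment_symm]
  simp only [vadd_eq_add, segment_translate_image]
  congr 1 <;> abel

theorem sub_mem_nhds_zero_of_nonempty_interior {G : Type*} [TopologicalSpace G] [AddGroup G]
    [IsTopologicalAddGroup G] {s : Set G} (hs : (interior s).Nonempty) : s - s ∈ 𝓝 0 := by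
  obtain ⟨x, hx⟩ := hs
  exact mem_interior_iff_mem_nhds.1
    (subset_interior_sub_left ⟨x, hx, x, interior_subset hx, sub_self x⟩)

theorem exists_pos_subset_smul_of_mem_nhds {E : Type*} [NormedAddCommGroup E] [NormedSpace ℝ E]
    {K C : Set E} (hC : C ∈ 𝓝 0) (hK : Bornology.IsBounded K) : ∃ ρ : ℝ, 0 < ρ ∧ K ⊆ ρ • C := by
  obtain ⟨ρ, hρ, h⟩ := ((NormedSpace.isVonNBounded_iff ℝ).2 hK hC).exists_pos
  exact ⟨ρ, hρ, h ρ (Real.norm_of_nonneg hρ.le).ge⟩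

section Diameter

variable {n : ℕ} {K C : Set (Fin n → ℝ)}

theorem circR_le_s16 {ρ : ℝ} (hρ : 0 < ρ) (hK : SubsetT K (ρ • C)) : circR K C ≤ ρ :=
  csInf_le ⟨0, fun _ h => h.1.le⟩ ⟨hρ, hK⟩

theorem le_circR {r : ℝ} (hK : ∃ ρ : ℝ, 0 < ρ ∧ SubsetT K (ρ • C))
    (h : ∀ ρ : ℝ, 0 < ρ → SubsetT K (ρ • C) → r ≤ ρ) : r ≤ circR K C :=
  le_csInf hK fun ρ hρ => h ρ hρ.1 hρ.2

theorem circR_vadd (v : Fin n → ℝ) : circR (v +ᵥ K) C = circR K C := by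
  unfold circR
  congr 1
  ext ρ
  refine and_congr_right fun _ => ⟨fun ⟨t, ht⟩ => ⟨-v + t, ?_⟩, fun ⟨t, ht⟩ => ⟨v + t, ?_⟩⟩
  · rwa [← vadd_set_subset_vadd_set_iff (a := v), vadd_vadd, add_neg_cancel_left]
  · rwa [← vadd_vadd, vadd_set_subset_vadd_set_iff]

theorem diamC_neg (K C : Set (Fin n → ℝ)) : diamC (-K) C = diamC K C := by
  have key : ∀ x y : Fin n → ℝ,
      circR (segment ℝ (-x) (-y)) C = circR (segment ℝ x y) C := fun x y => by
    rw [segment_neg_neg, circR_vadd]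
  unfold diamC
  congr 1
  ext d
  constructor
  · rintro ⟨x, hx, y, hy, rfl⟩
    exact ⟨-x, hx, -y, hy, by rw [key]⟩
  · rintro ⟨x, hx, y, hy, rfl⟩
    exact ⟨-x, neg_mem_neg.2 hx, -y, neg_mem_neg.2 hy, by rw [key]⟩

theorem IsBody.neg (hK : IsBody K) : IsBody (-K) := by
  obtain ⟨hconv, hcpt, x, hx⟩ := hK
  exact ⟨hconv.neg, hcpt.neg, -x,
    interior_maximal (neg_subset_neg.2 interior_subset) isOpen_interior.neg (neg_mem_neg.2 hx)⟩

theorem IsDiamComplete.neg (hK : IsDiamComplete K C) : IsDiamComplete (-K) C := by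
  intro K' hK' hsub
  have := hK (-K') hK'.neg ⟨neg_subset.1 hsub.1, fun h => hsub.2 (neg_subset.1 h)⟩
  rw [diamC_neg]
  rwa [diamC_neg] at this

theorem circR_segment_le_half (hC : Convex ℝ C) {x y : Fin n → ℝ} (hxy : x - y ∈ C)
    (hyx : y - x ∈ C) : circR (segment ℝ x y) C ≤ 1 / 2 := by
  refine circR_le_s16 one_half_pos ⟨(1 / 2 : ℝ) • (x + y), ((hC.smul _).vadd _).segment_subset ?_ ?_⟩
  · exact ⟨(1 / 2 : ℝ) • (x - y), smul_mem_smul_set hxy, by simp only [vadd_eq_add]; module⟩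
  · exact ⟨(1 / 2 : ℝ) • (y - x), smul_mem_smul_set hyx, by simp only [vadd_eq_add]; module⟩

theorem abs_sub_le_two_mul_circR (f : (Fin n → ℝ) →ₗ[ℝ] ℝ) (hf : ∀ u ∈ C, |f u| ≤ 1)
    (hK : ∃ ρ : ℝ, 0 < ρ ∧ SubsetT K (ρ • C)) {x y : Fin n → ℝ} (hx : x ∈ K) (hy : y ∈ K) :
    |f (x - y)| ≤ 2 * circR K C := by
  suffices |f (x - y)| / 2 ≤ circR K C by linarith
  refine le_circR hK fun ρ hρ ⟨t, ht⟩ => ?_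
  obtain ⟨_, ⟨a, ha, rfl⟩, rfl⟩ := ht hx
  obtain ⟨_, ⟨a', ha', rfl⟩, rfl⟩ := ht hy
  have hfa := hf a ha
  have hfa' := hf a' ha'
  have : |f (ρ • a - ρ • a')| ≤ ρ * 2 := calc
    |f (ρ • a - ρ • a')| = ρ * |f a - f a'| := by
      rw [map_sub, map_smul, map_smul, smul_eq_mul, smul_eq_mul, ← mul_sub, abs_mul,
        abs_of_pos hρ]
    _ ≤ ρ * 2 := by gcongr; exact (abs_sub _ _).trans (by linarith)
  simp only [vadd_eq_add, add_sub_add_left_eq_sub]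
  linarith

theorem diamC_le (hK : K.Nonempty) {d : ℝ}
    (h : ∀ x ∈ K, ∀ y ∈ K, 2 * circR (segment ℝ x y) C ≤ d) : diamC K C ≤ d := by
  obtain ⟨x, hx⟩ := hK
  exact csSup_le ⟨_, x, hx, x, hx, rfl⟩ fun _ ⟨x, hx, y, hy, e⟩ => e ▸ h x hx y hy

theorem le_diamC {d : ℝ} (h : ∀ x ∈ K, ∀ y ∈ K, 2 * circR (segment ℝ x y) C ≤ d)
    {x y : Fin n → ℝ} (hx : x ∈ K) (hy : y ∈ K) : 2 * circR (segment ℝ x y) C ≤ diamC K C :=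
  le_csSup ⟨d, fun _ ⟨x, hx, y, hy, e⟩ => e ▸ h x hx y hy⟩ ⟨x, hx, y, hy, rfl⟩

end Diameter

namespace AffineBasis

variable {E : Type*} [AddCommGroup E] [Module ℝ E]

theorem coord_le_one_of_mem_convexHull {ι : Type*} [Fintype ι] (b : AffineBasis ι ℝ E) {x : E}
    (hx : x ∈ convexHull ℝ (range b)) (i : ι) : b.coord i x ≤ 1 := by
  rw [b.convexHull_eq_nonneg_coord] at hx
  calc b.coord i x ≤ ∑ j, b.coord j x := Finset.single_le_sum (fun j _ => hx j) (Finset.mem_univ i)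
    _ = 1 := b.sum_coord_apply_eq_one x

theorem linear_coord_apply {ι : Type*} (b : AffineBasis ι ℝ E) (i : ι) (x : E) :
    (b.coord i).linear x = b.coord i x - b.coord i 0 := by
  simpa using (b.coord i).linearMap_vsub x 0

variable {n : ℕ} (b : AffineBasis (Fin (n + 1)) ℝ E)

theorem coord_zero_eq_of_neg_subset_smul
    (hcent : -convexHull ℝ (range b) ⊆ (n : ℝ) • convexHull ℝ (range b)) (i : Fin (n + 1)) :
    b.coord i 0 = ((n : ℝ) + 1)⁻¹ := by
  have hge : ∀ i, 1 ≤ ((n : ℝ) + 1) * b.coord i 0 := by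
    intro i
    obtain ⟨s, hs, hsi⟩ := hcent (neg_mem_neg.2 (subset_convexHull ℝ _ (mem_range_self i)))
    rw [b.convexHull_eq_nonneg_coord] at hs
    have : -(1 - b.coord i 0) = n * (b.coord i s - b.coord i 0) := calc
      -(1 - b.coord i 0) = (b.coord i).linear (-b i) := by
        rw [map_neg, linear_coord_apply, coord_apply_eq]
      _ = n * (b.coord i s - b.coord i 0) := by
        rw [← hsi, map_smul, linear_coord_apply, smul_eq_mul]
    nlinarith [mul_nonneg (Nat.cast_nonneg (α := ℝ) n) (hs i)]
  have hsum : ∑ i, (((n : ℝ) + 1) * b.coord i 0 - 1) = 0 := by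
    rw [Finset.sum_sub_distrib, ← Finset.mul_sum, b.sum_coord_apply_eq_one]
    simp
  have := (Finset.sum_eq_zero_iff_of_nonneg fun i _ => sub_nonneg.2 (hge i)).1 hsum i
    (Finset.mem_univ i)
  exact eq_inv_of_mul_eq_one_right (sub_eq_zero.1 this)

theorem smul_convexHull_inter_neg_eq (hc : ∀ i, b.coord i 0 = ((n : ℝ) + 1)⁻¹) :
    ((n : ℝ) + 1) • (convexHull ℝ (range b) ∩ -convexHull ℝ (range b)) =
      {u | ∀ i, |(b.coord i).linear u| ≤ 1} := by
  have hm : (0 : ℝ) < n + 1 := by positivity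
  have hcoord : ∀ i (x : E), b.coord i x = (b.coord i).linear x + ((n : ℝ) + 1)⁻¹ := by
    intro i x
    rw [linear_coord_apply, hc]
    ring
  ext u
  simp only [mem_smul_set_iff_inv_smul_mem₀ hm.ne', mem_inter_iff, mem_neg,
    b.convexHull_eq_nonneg_coord, mem_ofPred_eq, hcoord, map_neg, map_smul, smul_eq_mul,
    ← forall_and, abs_le]
  refine forall_congr' fun i => ?_
  have := inv_pos.2 hm
  constructor
  · rintro ⟨h1, h2⟩
    constructor <;> nlinarith [mul_inv_cancel₀ hm.ne']
  · rintro ⟨h1, h2⟩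
    constructor <;> nlinarith [mul_inv_cancel₀ hm.ne']

theorem convexHull_sub_subset_smul_inter_neg (hc : ∀ i, b.coord i 0 = ((n : ℝ) + 1)⁻¹) :
    convexHull ℝ (range b) - convexHull ℝ (range b) ⊆
      ((n : ℝ) + 1) • (convexHull ℝ (range b) ∩ -convexHull ℝ (range b)) := by
  rw [smul_convexHull_inter_neg_eq b hc]
  rintro _ ⟨x, hx, y, hy, rfl⟩ i
  have hx1 := b.coord_le_one_of_mem_convexHull hx i
  have hy1 := b.coord_le_one_of_mem_convexHull hy i
  rw [b.convexHull_eq_nonneg_coord] at hx hy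
  change |(b.coord i).linear (x -ᵥ y)| ≤ 1
  rw [AffineMap.linearMap_vsub, vsub_eq_sub, abs_le]
  constructor <;> linarith [hx i, hy i]

end AffineBasis

theorem AffineBasis.isDiamComplete_convexHull {n : ℕ}
    (b : AffineBasis (Fin (n + 1)) ℝ (Fin n → ℝ)) (hc : ∀ i, b.coord i 0 = ((n : ℝ) + 1)⁻¹)
    {C : Set (Fin n → ℝ)} (hCconv : Convex ℝ C)
    (hSC : convexHull ℝ (range b) - convexHull ℝ (range b) ⊆ C)
    (hCS : C ⊆ ((n : ℝ) + 1) • (convexHull ℝ (range b) ∩ -convexHull ℝ (range b))) :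
    IsDiamComplete (convexHull ℝ (range b)) C := by
  have hf : ∀ i, ∀ u ∈ C, |(b.coord i).linear u| ≤ 1 := by
    intro i u hu
    have := hCS hu
    rw [b.smul_convexHull_inter_neg_eq hc] at this
    exact this i
  have hC0 : C ∈ 𝓝 0 :=
    Filter.mem_of_superset
      (sub_mem_nhds_zero_of_nonempty_interior ⟨_, b.centroid_mem_interior_convexHull⟩) hSC
  have hdiamS : diamC (convexHull ℝ (range b)) C ≤ 1 :=
    diamC_le ⟨b 0, subset_convexHull ℝ _ (mem_range_self 0)⟩ fun x hx y hy => by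
      linarith [circR_segment_le_half hCconv (hSC (sub_mem_sub hx hy)) (hSC (sub_mem_sub hy hx))]
  intro K' hK' hsub
  obtain ⟨q, hqK', hqS⟩ := exists_of_ssubset hsub
  obtain ⟨j, hj⟩ : ∃ j, b.coord j q < 0 := by
    by_contra! h
    exact hqS (b.convexHull_eq_nonneg_coord ▸ h)
  have hbj : b j ∈ K' := hsub.1 (subset_convexHull ℝ _ (mem_range_self j))
  obtain ⟨ρ, hρ, hK'ρ⟩ := exists_pos_subset_smul_of_mem_nhds hC0 hK'.2.1.isBounded
  have hseg : ∀ x ∈ K', ∀ y ∈ K', SubsetT (segment ℝ x y) (ρ • C) := fun x hx y hy =>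
    ⟨0, by rw [zero_vadd]; exact (hK'.1.segment_subset hx hy).trans hK'ρ⟩
  calc diamC (convexHull ℝ (range b)) C ≤ 1 := hdiamS
    _ < |(b.coord j).linear (q -ᵥ b j)| := by
      rw [AffineMap.linearMap_vsub, coord_apply_eq, vsub_eq_sub, abs_of_neg (by linarith)]
      linarith
    _ ≤ 2 * circR (segment ℝ q (b j)) C :=
      abs_sub_le_two_mul_circR _ (hf j) ⟨ρ, hρ, hseg q hqK' (b j) hbj⟩
        (left_mem_segment ℝ _ _) (right_mem_segment ℝ _ _)
    _ ≤ diamC K' C :=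
      le_diamC (d := 2 * ρ) (fun x hx y hy => by linarith [circR_le_s16 hρ (hseg x hx y hy)])
        hqK' hbj

theorem stmt16_general {n : ℕ} (S : Set (Fin n → ℝ)) (hS : IsSimplexBody S)
    (hcent : -S ⊆ (n : ℝ) • S) (p : Fin n → ℝ)
    (hp : p ∈ ((n : ℝ) + 1) • (S ∩ -S) \ (S - S))
    (C : Set (Fin n → ℝ)) (hC : C = convexHull ℝ (insert p (S - S))) :
    IsDiamComplete S C ∧ IsDiamComplete (-S) C := by
  obtain ⟨v, hv, rfl⟩ := hS
  let b : AffineBasis (Fin (n + 1)) ℝ (Fin n → ℝ) :=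
    ⟨v, hv, hv.affineSpan_eq_top_iff_card_eq_finrank_add_one.2 (by simp)⟩
  have hc := b.coord_zero_eq_of_neg_subset_smul hcent
  have hT : Convex ℝ (((n : ℝ) + 1) • (convexHull ℝ (range v) ∩ -convexHull ℝ (range v))) :=
    ((convex_convexHull ℝ _).inter (convex_convexHull ℝ _).neg).smul _
  have hSC : convexHull ℝ (range v) - convexHull ℝ (range v) ⊆ C :=
    hC ▸ (subset_insert _ _).trans (subset_convexHull ℝ _)
  have hCS :=
    hC ▸ convexHull_min (insert_subset hp.1 (b.convexHull_sub_subset_smul_inter_neg hc)) hT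
  have hS := b.isDiamComplete_convexHull hc (hC ▸ convex_convexHull ℝ _) hSC hCS
  exact ⟨hS, hS.neg⟩

theorem stmt16 {n : ℕ} (S : Set (Fin n → ℝ)) (hS : IsSimplexBody S) (hSbody : IsBody S)
    (hcent : -S ⊆ (n : ℝ) • S) (p : Fin n → ℝ)
    (hp : p ∈ ((n : ℝ) + 1) • (S ∩ -S) \ (S - S))
    (C : Set (Fin n → ℝ)) (hC : C = convexHull ℝ (insert p (S - S))) :
    IsDiamComplete S C ∧ IsDiamComplete (-S) C :=
  stmt16_general S hS hcent p hp C hC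
end
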